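/- arXiv:1807.03949 — 3 statements merged into one kernel-verified Lean document; each statement's English description precedes it below -/
import Mathlib

section
/- For n ≥ 1, let g_n(t) = ∑_{k=1}^n (1 − k/n)(1/k) sin(kt) and e_n(t) = e^{int}. Then the n-th symmetric partial Fourier sum of the product e_n·g_n evaluated at 0 equals ∑_{k=1}^n (1 − k/n)·(−1)/(2ik), and hence |S_n(e_n g_n)(0)| = ∑_{k=1}^n (1 − k/n)/(2k). -/
open Real Complex MeasureTheory Filter

/-- The `k`-th Fourier coefficient of a `2π`-periodic function `f : ℝ → ℂ`. -/
noncomputable def fc (f : ℝ → ℂ) (k : ℤ) : ℂ :=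
  (1 / (2 * Real.pi)) * ∫ θ in (-Real.pi)..Real.pi, f θ * Complex.exp (-Complex.I * k * θ)

/-- The `N`-th symmetric partial sum of the Fourier series of `f`. -/
noncomputable def pS (f : ℝ → ℂ) (N : ℕ) (t : ℝ) : ℂ :=
  ∑ k ∈ Finset.Icc (-(N : ℤ)) (N : ℤ), fc f k * Complex.exp (Complex.I * k * t)

/-- `g_n(t) = ∑_{k=1}^n (1 - k/n)(1/k) sin(kt)` viewed as a complex-valued function. -/
noncomputable def gFun (n : ℕ) (t : ℝ) : ℂ :=
  ∑ k ∈ Finset.Icc 1 n, (1 - (k : ℂ) / n) * (1 / k) * Real.sin (k * t)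

/-- `e_n(t) = e^{int}`. -/
noncomputable def eFun (n : ℕ) (t : ℝ) : ℂ := Complex.exp (Complex.I * n * t)

/-! Writing `sin (k t) = (e^{ikt} - e^{-ikt}) / (2i)` turns `e_n g_n` into a trigonometric
polynomial with frequencies `n ± k`, `1 ≤ k ≤ n`. By orthogonality of the exponentials on
`[-π, π]`, `S_n` keeps exactly the frequencies in `[-n, n]`: every `n - k` and no `n + k`.
At `t = 0` the surviving terms are `(1 - k/n)(-1)/(2ik) = i (1 - k/n)/(2k)`, all on the
nonnegative imaginary axis, so the modulus of their sum is the sum of the moduli. -/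

open Finset

theorem integral_exp_I_int_mul (j : ℤ) :
    ∫ θ in (-π)..π, exp (I * j * θ) = if j = 0 then (2 * π : ℂ) else 0 := by
  split_ifs with hj
  · simp [hj, two_mul]
  · have hc : I * j ≠ 0 := mul_ne_zero I_ne_zero (Int.cast_ne_zero.mpr hj)
    have hperiod : exp (I * j * π) = exp (I * j * ↑(-π)) := by
      rw [← mul_one (exp (I * j * ↑(-π))), ← exp_int_mul_two_pi_mul_I j, ← Complex.exp_add]
      push_cast
      ring_nf
    rw [integral_exp_mul_complex hc, hperiod, sub_self, zero_div]

theorem fc_exp_I_int_mul (j m : ℤ) :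
    fc (fun t => exp (I * j * t)) m = if m = j then 1 else 0 := by
  have hprod (θ : ℝ) : exp (I * j * θ) * exp (-I * m * θ) = exp (I * ↑(j - m) * θ) := by
    rw [← Complex.exp_add]
    push_cast
    ring_nf
  have hπ : (π : ℂ) ≠ 0 := ofReal_ne_zero.mpr pi_ne_zero
  simp only [fc, hprod, integral_exp_I_int_mul, sub_eq_zero, eq_comm (a := j)]
  split_ifs
  · field_simp
  · simp

theorem fc_const_mul (c : ℂ) (f : ℝ → ℂ) (m : ℤ) :
    fc (fun t => c * f t) m = c * fc f m := by
  simp only [fc, mul_assoc, intervalIntegral.integral_const_mul]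
  ring

theorem fc_add {f g : ℝ → ℂ} (hf : IntervalIntegrable f volume (-π) π)
    (hg : IntervalIntegrable g volume (-π) π) (m : ℤ) :
    fc (fun t => f t + g t) m = fc f m + fc g m := by
  have hexp : Continuous fun θ : ℝ => exp (-I * m * θ) := by fun_prop
  simp only [fc, add_mul]
  rw [intervalIntegral.integral_add (hf.mul_continuousOn hexp.continuousOn)
    (hg.mul_continuousOn hexp.continuousOn), mul_add]

theorem fc_sum {ι : Type*} (s : Finset ι) {f : ι → ℝ → ℂ}
    (hf : ∀ i ∈ s, IntervalIntegrable (f i) volume (-π) π) (m : ℤ) :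
    fc (fun t => ∑ i ∈ s, f i t) m = ∑ i ∈ s, fc (f i) m := by
  have hexp : Continuous fun θ : ℝ => exp (-I * m * θ) := by fun_prop
  simp only [fc, sum_mul]
  rw [intervalIntegral.integral_finsetSum
    fun i hi => (hf i hi).mul_continuousOn hexp.continuousOn, mul_sum]

theorem pS_add {f g : ℝ → ℂ} (hf : IntervalIntegrable f volume (-π) π)
    (hg : IntervalIntegrable g volume (-π) π) (N : ℕ) (t : ℝ) :
    pS (fun t => f t + g t) N t = pS f N t + pS g N t := by
  simp only [pS, fc_add hf hg, add_mul, sum_add_distrib]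

theorem pS_sum_mul_exp {ι : Type*} (s : Finset ι) (a : ι → ℂ) (ν : ι → ℤ) (N : ℕ) (t : ℝ) :
    pS (fun t => ∑ i ∈ s, a i * exp (I * ν i * t)) N t =
      ∑ i ∈ s with ν i ∈ Icc (-(N : ℤ)) N, a i * exp (I * ν i * t) := by
  have hint (i : ι) : IntervalIntegrable (fun t : ℝ => a i * exp (I * ν i * t)) volume (-π) π :=
    (by fun_prop : Continuous _).intervalIntegrable _ _
  simp only [pS, fc_sum s fun i _ => hint i, fc_const_mul, fc_exp_I_int_mul, mul_ite, mul_one,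
    mul_zero, sum_mul, ite_mul, zero_mul]
  rw [sum_comm, sum_filter]
  refine sum_congr rfl fun i _ => ?_
  rw [sum_ite_eq']

theorem exp_mul_sin (a b t : ℂ) :
    exp (I * a * t) * Complex.sin (b * t) =
      (exp (I * (a + b) * t) - exp (I * (a - b) * t)) / (2 * I) := by
  have hadd : exp (I * (a + b) * t) = exp (I * a * t) * exp (b * t * I) := by
    rw [← Complex.exp_add]; ring_nf
  have hsub : exp (I * (a - b) * t) = exp (I * a * t) * exp (-(b * t) * I) := by
    rw [← Complex.exp_add]; ring_nf
  rw [hadd, hsub, Complex.sin]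
  field_simp
  ring_nf
  rw [I_sq]
  ring

theorem eFun_mul_gFun (n : ℕ) (t : ℝ) :
    eFun n t * gFun n t =
      ∑ k ∈ Icc 1 n, (1 - (k : ℂ) / n) / (2 * I * k) * exp (I * ↑((n : ℤ) + k) * t) +
      ∑ k ∈ Icc 1 n, (1 - (k : ℂ) / n) * (-1) / (2 * I * k) * exp (I * ↑((n : ℤ) - k) * t) := by
  rw [← sum_add_distrib, eFun, gFun, mul_sum]
  refine sum_congr rfl fun k _ => ?_
  push_cast
  rw [mul_left_comm, exp_mul_sin]
  ring

theorem pS_eFun_mul_gFun_zero (n : ℕ) :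
    pS (fun t => eFun n t * gFun n t) n 0 =
      ∑ k ∈ Icc 1 n, (1 - (k : ℂ) / n) * (-1) / (2 * I * k) := by
  simp only [eFun_mul_gFun]
  rw [pS_add ((by fun_prop : Continuous _).intervalIntegrable _ _)
    ((by fun_prop : Continuous _).intervalIntegrable _ _), pS_sum_mul_exp, pS_sum_mul_exp,
    filter_false_of_mem, filter_true_of_mem]
  · simp
  all_goals
    intro k hk
    simp only [mem_Icc] at hk ⊢
    omega

theorem partial_sum_at_zero_general (n : ℕ) :
    pS (fun t => eFun n t * gFun n t) n 0 =
      ∑ k ∈ Finset.Icc 1 n, (1 - (k : ℂ) / n) * (-1) / (2 * Complex.I * k) ∧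
    ‖pS (fun t => eFun n t * gFun n t) n 0‖ =
      ∑ k ∈ Finset.Icc 1 n, (1 - (k : ℝ) / n) / (2 * k) := by
  refine ⟨pS_eFun_mul_gFun_zero n, ?_⟩
  have hterm (k : ℕ) :
      (1 - (k : ℂ) / n) * (-1) / (2 * I * k) = I * ↑((1 - (k : ℝ) / n) / (2 * k)) := by
    push_cast
    simp only [div_eq_mul_inv, mul_inv, inv_I]
    ring
  have hnonneg : ∀ k ∈ Icc 1 n, 0 ≤ (1 - (k : ℝ) / n) / (2 * k) := fun k hk =>
    div_nonneg (sub_nonneg.2 (div_le_one_of_le₀ (by exact_mod_cast (mem_Icc.1 hk).2) n.cast_nonneg))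
      (by positivity)
  rw [pS_eFun_mul_gFun_zero, sum_congr rfl fun k _ => hterm k, ← mul_sum, norm_mul, norm_I,
    one_mul, ← ofReal_sum, norm_real, norm_of_nonneg (sum_nonneg hnonneg)]

theorem partial_sum_at_zero (n : ℕ) (hn : 1 ≤ n) :
    pS (fun t => eFun n t * gFun n t) n 0 =
      ∑ k ∈ Finset.Icc 1 n, (1 - (k : ℂ) / n) * (-1) / (2 * Complex.I * k) ∧
    ‖pS (fun t => eFun n t * gFun n t) n 0‖ =
      ∑ k ∈ Finset.Icc 1 n, (1 - (k : ℝ) / n) / (2 * k) :=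
  partial_sum_at_zero_general n
end

section
/- The functions g_n(t) = ∑_{k=1}^n (1 − k/n)(1/k) sin(kt) satisfy sup_n ‖g_n‖_U < ∞, where ‖h‖_U = sup_N ‖S_N(h)‖_∞. -/
open Real Complex MeasureTheory Filter

open Finset

/-!
The partial sums of `gFun n` are the truncations `∑_{k ≤ min n N} (1/k - 1/n) sin (k t)`, so it
suffices to bound `∑_{k=1}^m b_k sin (k t)` uniformly over all coefficients with `b_k ≥ 0`
decreasing and `k b_k ≤ 1`. By periodicity and oddness we may take `0 < t ≤ π`, and we split at
`M = ⌊1/t⌋`. Each of the first `M` terms is at most `b_k k t ≤ t`, so together they contribute at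
most `1`. For the remaining terms, Abel summation against the conjugate Dirichlet kernel
`|∑_{i<j} sin (i t)| ≤ 1 / sin (t/2) ≤ π/t` gives at most `2 b_{M+1} π/t ≤ 2π`.
-/

lemma two_mul_sin_half_mul_sum_range_sin (t : ℝ) (j : ℕ) :
    2 * Real.sin (t / 2) * ∑ i ∈ range j, Real.sin (i * t) =
      Real.cos (t / 2) - Real.cos ((j - 1 / 2) * t) := by
  induction j with
  | zero =>
    rw [sum_range_zero, mul_zero, Nat.cast_zero, show (0 - 1 / 2) * t = -(t / 2) by ring,
      Real.cos_neg, sub_self]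
  | succ j ih =>
    have h : 2 * Real.sin (t / 2) * Real.sin (j * t) =
        Real.cos ((j - 1 / 2) * t) - Real.cos ((j + 1 - 1 / 2) * t) := by
      rw [show (j - 1 / 2) * t = j * t - t / 2 by ring,
        show (j + 1 - 1 / 2) * t = j * t + t / 2 by ring, Real.cos_sub, Real.cos_add]
      ring
    rw [sum_range_succ, mul_add, ih, h]
    push_cast
    ring

lemma abs_sum_range_sin_le {t : ℝ} (ht : 0 < t) (htπ : t ≤ π) (j : ℕ) :
    |∑ i ∈ range j, Real.sin (i * t)| ≤ π / t := by
  have hsin : t / π ≤ Real.sin (t / 2) := by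
    have := Real.mul_le_sin (x := t / 2) (by positivity) (by linarith)
    calc t / π = 2 / π * (t / 2) := by ring
      _ ≤ _ := this
  have hsin_pos : 0 < Real.sin (t / 2) := (by positivity : 0 < t / π).trans_le hsin
  have htwo : |2 * Real.sin (t / 2) * ∑ i ∈ range j, Real.sin (i * t)| ≤ 2 := by
    rw [two_mul_sin_half_mul_sum_range_sin]
    have h1 := abs_le.1 (Real.abs_cos_le_one (t / 2))
    have h2 := abs_le.1 (Real.abs_cos_le_one ((j - 1 / 2) * t))
    exact abs_sub_le_iff.2 ⟨by linarith, by linarith⟩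
  rw [abs_mul, abs_of_pos (by positivity : 0 < 2 * Real.sin (t / 2))] at htwo
  calc |∑ i ∈ range j, Real.sin (i * t)| ≤ 1 / Real.sin (t / 2) := by
        rw [le_div_iff₀ hsin_pos]; linarith
    _ ≤ 1 / (t / π) := one_div_le_one_div_of_le (by positivity) hsin
    _ = π / t := one_div_div t π

lemma norm_sum_Ioc_smul_le {E : Type*} [SeminormedAddCommGroup E] [NormedSpace ℝ E]
    {a : ℕ → E} {b : ℕ → ℝ} {B : ℝ} {M m : ℕ} (hMm : M < m)
    (hb : AntitoneOn b (Set.Icc (M + 1) m)) (hbm : 0 ≤ b m)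
    (hB : ∀ j, ‖∑ i ∈ range j, a i‖ ≤ B) :
    ‖∑ k ∈ Ioc M m, b k • a k‖ ≤ 2 * b (M + 1) * B := by
  have hmono : ∀ i ∈ Ioc M (m - 1), b (i + 1) ≤ b i := fun i hi => by
    rw [mem_Ioc] at hi
    exact hb ⟨by omega, by omega⟩ ⟨by omega, by omega⟩ (by omega)
  have htele : ∑ i ∈ Ioc M (m - 1), (b i - b (i + 1)) = b (M + 1) - b m := by
    rw [← Ico_add_one_add_one_eq_Ioc, Nat.sub_add_cancel (by omega : 1 ≤ m)]
    rw [← neg_sub, ← sum_Ico_sub b (by omega : M + 1 ≤ m), ← sum_neg_distrib]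
    exact sum_congr rfl fun i _ => (neg_sub _ _).symm
  have hbM : b m ≤ b (M + 1) := hb ⟨by omega, by omega⟩ ⟨by omega, le_rfl⟩ (by omega)
  rw [sum_Ioc_by_parts _ _ hMm]
  calc _ ≤ ‖b m • ∑ i ∈ range (m + 1), a i‖ + ‖b (M + 1) • ∑ i ∈ range (M + 1), a i‖
        + ‖∑ i ∈ Ioc M (m - 1), (b (i + 1) - b i) • ∑ j ∈ range (i + 1), a j‖ :=
        norm_sub_le_of_le (norm_sub_le _ _) le_rfl
    _ ≤ b m * B + b (M + 1) * B + ∑ i ∈ Ioc M (m - 1), (b i - b (i + 1)) * B := by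
        have hsmul {c : ℝ} (hc : 0 ≤ c) (j : ℕ) : ‖c • ∑ i ∈ range j, a i‖ ≤ c * B := by
          rw [norm_smul, Real.norm_of_nonneg hc]
          exact mul_le_mul_of_nonneg_left (hB j) hc
        gcongr
        · exact hsmul hbm _
        · exact hsmul (hbm.trans hbM) _
        · refine (norm_sum_le _ _).trans (sum_le_sum fun i hi => ?_)
          rw [← neg_sub (b i), neg_smul, norm_neg]
          exact hsmul (sub_nonneg.2 (hmono i hi)) _
    _ = 2 * b (M + 1) * B := by rw [← sum_mul, htele]; ring

lemma abs_sum_mul_sin_le_mul {b : ℕ → ℝ} {L : ℕ} (hb0 : ∀ k ∈ Set.Icc 1 L, 0 ≤ b k)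
    (hkb : ∀ k ∈ Set.Icc 1 L, k * b k ≤ 1) {t : ℝ} (ht : 0 ≤ t) :
    |∑ k ∈ Icc 1 L, b k * Real.sin (k * t)| ≤ L * t := by
  calc |∑ k ∈ Icc 1 L, b k * Real.sin (k * t)| ≤ ∑ k ∈ Icc 1 L, t := by
        refine (abs_sum_le_sum_abs _ _).trans (sum_le_sum fun k hk => ?_)
        have hk := Finset.mem_Icc.1 hk
        have hsin : |Real.sin (k * t)| ≤ k * t := by
          simpa [abs_of_nonneg (by positivity : (0 : ℝ) ≤ k * t)] using
            Real.abs_sin_le_abs (x := k * t)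
        rw [abs_mul, abs_of_nonneg (hb0 k hk)]
        calc b k * |Real.sin (k * t)| ≤ b k * (k * t) := by gcongr; exact hb0 k hk
          _ = (k * b k) * t := by ring
          _ ≤ t := mul_le_of_le_one_left ht (hkb k hk)
    _ = L * t := by simp

lemma abs_sum_mul_sin_le_of_pos {b : ℕ → ℝ} {m : ℕ} (hb0 : ∀ k ∈ Set.Icc 1 m, 0 ≤ b k)
    (hb : AntitoneOn b (Set.Icc 1 m)) (hkb : ∀ k ∈ Set.Icc 1 m, k * b k ≤ 1) {t : ℝ}
    (ht : 0 < t) (htπ : t ≤ π) :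
    |∑ k ∈ Icc 1 m, b k * Real.sin (k * t)| ≤ 1 + 2 * π := by
  set M := ⌊1 / t⌋₊
  have hMt : M * t ≤ 1 := by
    have := Nat.floor_le (by positivity : 0 ≤ 1 / t)
    rwa [le_div_iff₀ ht] at this
  have htM : 1 < (M + 1) * t := by
    have := Nat.lt_floor_add_one (1 / t)
    rwa [div_lt_iff₀ ht] at this
  have hhead {L : ℕ} (hL : L ≤ M) (hLm : L ≤ m) :
      |∑ k ∈ Icc 1 L, b k * Real.sin (k * t)| ≤ 1 := by
    refine (abs_sum_mul_sin_le_mul (fun k hk => hb0 k ⟨hk.1, hk.2.trans hLm⟩)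
      (fun k hk => hkb k ⟨hk.1, hk.2.trans hLm⟩) ht.le).trans (le_trans ?_ hMt)
    gcongr
  rcases le_or_gt m M with hmM | hMm
  · linarith [hhead hmM le_rfl, Real.pi_pos]
  have hsplit : Icc 1 m = Icc 1 M ∪ Ioc M m := by
    ext k
    simp only [mem_union, mem_Icc, mem_Ioc]
    omega
  have hbM : b (M + 1) ≤ t := by
    have := hkb (M + 1) ⟨by omega, by omega⟩
    push_cast at this
    nlinarith
  have htail : |∑ k ∈ Ioc M m, b k * Real.sin (k * t)| ≤ 2 * π := by
    have habel : |∑ k ∈ Ioc M m, b k * Real.sin (k * t)| ≤ 2 * b (M + 1) * (π / t) :=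
      norm_sum_Ioc_smul_le (a := fun k => Real.sin (k * t)) hMm
        (hb.mono (Set.Icc_subset_Icc_left (by omega)))
        (hb0 m ⟨by omega, le_rfl⟩) (abs_sum_range_sin_le ht htπ)
    calc _ ≤ 2 * b (M + 1) * (π / t) := habel
      _ ≤ 2 * t * (π / t) := by gcongr
      _ = 2 * π := by field_simp
  rw [hsplit, sum_union (disjoint_left.2 fun k hk hk' => by
    simp only [mem_Icc, mem_Ioc] at hk hk'; omega)]
  exact (abs_add_le _ _).trans (add_le_add (hhead le_rfl hMm.le) htail)

lemma Function.Periodic.abs_le_of_odd {f : ℝ → ℝ} {c C : ℝ} (hf : Function.Periodic f c)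
    (hc : 0 < c) (hodd : Function.Odd f) (hC : ∀ t ∈ Set.Icc 0 (c / 2), |f t| ≤ C) (t : ℝ) :
    |f t| ≤ C := by
  obtain ⟨y, ⟨hy0, hyc⟩, hfy⟩ := hf.exists_mem_Ico₀ hc t
  rw [hfy]
  rcases le_or_gt y (c / 2) with hy | hy
  · exact hC y ⟨hy0, hy⟩
  · rw [← hf.sub_eq, ← neg_sub, hodd, abs_neg]
    exact hC (c - y) ⟨by linarith, by linarith⟩

theorem abs_sum_mul_sin_le {b : ℕ → ℝ} {m : ℕ} (hb0 : ∀ k ∈ Set.Icc 1 m, 0 ≤ b k)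
    (hb : AntitoneOn b (Set.Icc 1 m)) (hkb : ∀ k ∈ Set.Icc 1 m, k * b k ≤ 1) (t : ℝ) :
    |∑ k ∈ Icc 1 m, b k * Real.sin (k * t)| ≤ 1 + 2 * π := by
  refine Function.Periodic.abs_le_of_odd (f := fun t => ∑ k ∈ Icc 1 m, b k * Real.sin (k * t))
    (fun t => ?_) Real.two_pi_pos (fun t => ?_) (fun t ht => ?_) t
  · simp only [mul_add, Real.sin_add_nat_mul_two_pi]
  · simp only [mul_neg, Real.sin_neg, sum_neg_distrib]
  · rcases ht.1.eq_or_lt with rfl | ht0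
    · simp only [mul_zero, Real.sin_zero, sum_const_zero, abs_zero]
      positivity
    · exact abs_sum_mul_sin_le_of_pos hb0 hb hkb ht0 (by linarith [ht.2])

lemma integral_exp_int_mul_mul_I (m : ℤ) :
    ∫ θ in -π..π, Complex.exp (m * θ * Complex.I) = if m = 0 then (2 * π : ℂ) else 0 := by
  split_ifs with hm
  · simp only [hm, Int.cast_zero, zero_mul, Complex.exp_zero, intervalIntegral.integral_const,
      sub_neg_eq_add, real_smul, ofReal_add, mul_one]
    ring
  · have hm' : (m : ℝ) ≠ 0 := by exact_mod_cast hm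
    have := intervalIntegral.integral_comp_mul_left
      (fun x : ℝ => Complex.exp (x * Complex.I)) (a := -π) (b := π) hm'
    push_cast at this
    rw [this, mul_neg, integral_exp_mul_I_eq_sin, Real.sin_int_mul_pi]
    simp

lemma fc_sin (k : ℕ) (j : ℤ) :
    fc (fun θ => Real.sin (k * θ)) j =
      ((if j = k then 1 else 0) - (if j = -k then 1 else 0)) / (2 * Complex.I) := by
  have hexp (θ : ℝ) : (Real.sin (k * θ) : ℂ) * Complex.exp (-Complex.I * j * θ) =
      (Complex.exp (((k - j : ℤ) : ℂ) * θ * Complex.I) -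
        Complex.exp (((-k - j : ℤ) : ℂ) * θ * Complex.I)) / (2 * Complex.I) := by
    have e₁ : ((k - j : ℤ) : ℂ) * θ * Complex.I =
        (k * θ : ℝ) * Complex.I + -Complex.I * j * θ := by
      push_cast; ring
    have e₂ : ((-k - j : ℤ) : ℂ) * θ * Complex.I =
        -(k * θ : ℝ) * Complex.I + -Complex.I * j * θ := by
      push_cast; ring
    rw [e₁, e₂, Complex.exp_add, Complex.exp_add, ← sub_mul, Complex.ofReal_sin, Complex.sin]
    field_simp
    ring_nf
    rw [Complex.I_sq]
    ring
  simp only [fc, hexp]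
  rw [intervalIntegral.integral_div, intervalIntegral.integral_sub, integral_exp_int_mul_mul_I,
    integral_exp_int_mul_mul_I]
  · have hπ : (π : ℂ) ≠ 0 := Complex.ofReal_ne_zero.2 Real.pi_ne_zero
    simp only [sub_eq_zero, eq_comm (b := j)]
    split_ifs <;> field_simp <;> ring
  all_goals exact (by fun_prop : Continuous _).intervalIntegrable _ _

lemma fc_sum_mul {ι : Type*} {s : Finset ι} {f : ι → ℝ → ℂ} (hf : ∀ k ∈ s, Continuous (f k))
    (a : ι → ℂ) (j : ℤ) :
    fc (fun θ => ∑ k ∈ s, a k * f k θ) j = ∑ k ∈ s, a k * fc (f k) j := by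
  simp only [fc, sum_mul, mul_assoc]
  rw [intervalIntegral.integral_finsetSum fun k hk =>
    (by fun_prop (disch := exact hf k hk) : Continuous _).intervalIntegrable _ _, mul_sum]
  simp only [intervalIntegral.integral_const_mul]
  exact sum_congr rfl fun k _ => by ring

lemma pS_sum_mul {ι : Type*} {s : Finset ι} {f : ι → ℝ → ℂ} (hf : ∀ k ∈ s, Continuous (f k))
    (a : ι → ℂ) (N : ℕ) (t : ℝ) :
    pS (fun θ => ∑ k ∈ s, a k * f k θ) N t = ∑ k ∈ s, a k * pS (f k) N t := by
  simp only [pS, fc_sum_mul hf, sum_mul, mul_sum]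
  rw [sum_comm]
  exact sum_congr rfl fun k _ => sum_congr rfl fun j _ => mul_assoc _ _ _

lemma pS_sin (k N : ℕ) (t : ℝ) :
    pS (fun θ => Real.sin (k * θ)) N t = if k ≤ N then (Real.sin (k * t) : ℂ) else 0 := by
  simp only [pS, fc_sin, div_mul_eq_mul_div, sub_mul, ite_mul, one_mul, zero_mul, ← sum_div,
    sum_sub_distrib, sum_ite_eq', mem_Icc]
  by_cases hk : k ≤ N
  · rw [if_pos ⟨by omega, by omega⟩, if_pos ⟨by omega, by omega⟩, if_pos hk, Complex.ofReal_sin,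
      Complex.sin]
    push_cast
    field_simp
    ring_nf
    rw [Complex.I_sq]
    ring
  · rw [if_neg (by omega), if_neg (by omega), if_neg hk, sub_zero, zero_div]

lemma pS_sum_mul_sin (s : Finset ℕ) (a : ℕ → ℂ) (N : ℕ) (t : ℝ) :
    pS (fun θ => ∑ k ∈ s, a k * Real.sin (k * θ)) N t =
      ∑ k ∈ s with k ≤ N, a k * Real.sin (k * t) := by
  rw [pS_sum_mul (f := fun (k : ℕ) (θ : ℝ) => (Real.sin (k * θ) : ℂ)) (fun k _ => by fun_prop),
    sum_filter]
  simp only [pS_sin, mul_ite, mul_zero]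

lemma pS_gFun (n N : ℕ) (t : ℝ) :
    pS (gFun n) N t =
      ((∑ k ∈ Icc 1 (min n N), (1 / k - 1 / n) * Real.sin (k * t) : ℝ) : ℂ) := by
  have hIcc : {k ∈ Icc 1 n | k ≤ N} = Icc 1 (min n N) := by
    ext k
    simp only [mem_filter, mem_Icc]
    omega
  unfold gFun
  rw [pS_sum_mul_sin, hIcc, Complex.ofReal_sum]
  refine sum_congr rfl fun k hk => ?_
  have : (k : ℂ) ≠ 0 := Nat.cast_ne_zero.2 (by have := (mem_Icc.1 hk).1; omega)
  rw [Complex.ofReal_mul]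
  congr 1
  push_cast
  field_simp

theorem gFun_U_norm_bounded :
    ∃ C : ℝ, ∀ n : ℕ, 1 ≤ n → ∀ (N : ℕ) (t : ℝ),
      ‖pS (gFun n) N t‖ ≤ C := by
  refine ⟨1 + 2 * π, fun n _ N t => ?_⟩
  have hpos {k : ℕ} (hk : k ∈ Set.Icc 1 (min n N)) : (0 : ℝ) < k := by
    have := hk.1; positivity
  have hb0 : ∀ k ∈ Set.Icc 1 (min n N), 0 ≤ (1 / k - 1 / n : ℝ) := fun k hk =>
    sub_nonneg.2 <| one_div_le_one_div_of_le (hpos hk) <| by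
      exact_mod_cast hk.2.trans (min_le_left _ _)
  have hb : AntitoneOn (fun k : ℕ => (1 / k - 1 / n : ℝ)) (Set.Icc 1 (min n N)) :=
    fun i hi j _ hij =>
      sub_le_sub_right (one_div_le_one_div_of_le (hpos hi) (by exact_mod_cast hij)) _
  have hkb : ∀ k ∈ Set.Icc 1 (min n N), k * (1 / k - 1 / n : ℝ) ≤ 1 := fun k hk => by
    rw [mul_sub, mul_one_div_cancel (hpos hk).ne', mul_one_div]
    linarith [show (0 : ℝ) ≤ k / n by positivity]
  rw [pS_gFun, Complex.norm_real, Real.norm_eq_abs]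
  exact abs_sum_mul_sin_le hb0 hb hkb t
end

section
/- If f is a continuous 2π-periodic function with ∑_{k∈ℤ}|f̂(k)| < ∞ and g is a continuous 2π-periodic function whose one-sided (analytic) partial sums ∑_{0≤k≤N} ĝ(k)e^{ikt} converge uniformly, with ĝ(k) = 0 for k < 0 and f̂(k) = 0 for k < 0, then the partial sums ∑_{0≤k≤N} (f g)^(k)e^{ikt} converge uniformly to fg. -/
open Real Complex MeasureTheory Filter

/-!
Write `S_n h = ∑_{k<n} ĥ(k) e_k` with `e_k t = exp (i k t)`. As `f̂` is absolutely summable and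
supported on `ℕ`, `f = ∑_j f̂(j) e_j` pointwise, and integrating this series termwise against `g`
gives the Cauchy-product formula `(fg)^(k) = ∑_{j ≤ k} f̂(j) ĝ(k - j)`. Hence
`S_n (fg) = ∑_{j<n} f̂(j) e_j S_{n-j} g`, and since `n - j` truncates to `0` (and `S_0 g = 0`)
for `j ≥ n`,
  `fg - S_n (fg) = ∑_j f̂(j) e_j (g - S_{n-j} g)`.
So `‖fg - S_n (fg)‖_∞ ≤ ∑_j |f̂(j)| β_{n-j}` with `β_m = ‖g - S_m g‖_∞ → 0`, and the right-hand side
tends to `0` by dominated convergence for series (Tannery's theorem).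
-/

open Topology Finset

lemma tendsto_iSup_norm_sub_of_tendstoUniformly {ι α E : Type*} [SeminormedAddCommGroup E]
    {l : Filter ι} {F : ι → α → E} {f : α → E} (h : TendstoUniformly F f l) :
    Tendsto (fun i => ⨆ x, ‖f x - F i x‖) l (𝓝 0) := by
  refine Metric.tendsto_nhds.mpr fun ε hε => ?_
  filter_upwards [Metric.tendstoUniformly_iff.mp h (ε / 2) (half_pos hε)] with i hi
  rw [Real.dist_0_eq_abs, abs_of_nonneg (Real.iSup_nonneg fun _ => norm_nonneg _)]
  refine (Real.iSup_le (fun x => ?_) (half_pos hε).le).trans_lt (half_lt_self hε)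
  exact (dist_eq_norm (f x) (F i x) ▸ hi x).le

lemma summable_mul_comp_tsub {a : ℕ → ℝ} (β : ℕ → ℝ) (ha : Summable a) (n : ℕ) :
    Summable fun j => a j * β (n - j) :=
  (summable_nat_add_iff n).mp <| by
    simpa using ((summable_nat_add_iff n).mpr ha).mul_right (β 0)

lemma tendsto_tsum_mul_comp_tsub {a β : ℕ → ℝ} (ha : Summable a)
    (hβ : Tendsto β atTop (𝓝 0)) :
    Tendsto (fun n => ∑' j, a j * β (n - j)) atTop (𝓝 0) := by
  obtain ⟨B, hB⟩ := isBounded_iff_forall_norm_le.mp (Metric.isBounded_range_of_tendsto β hβ)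
  have h := tendsto_tsum_of_dominated_convergence (f := fun n j => a j * β (n - j))
    (g := fun _ => 0) (bound := fun j => ‖a j‖ * B)
    (ha.norm.mul_right B)
    (fun j => by simpa using (hβ.comp (tendsto_sub_atTop_nat j)).const_mul (a j))
    (Eventually.of_forall fun n j => by
      rw [norm_mul]
      exact mul_le_mul_of_nonneg_left (hB _ ⟨n - j, rfl⟩) (norm_nonneg _))
  simpa only [tsum_zero] using h

noncomputable def analyticPartialSum (h : ℝ → ℂ) (n : ℕ) (t : ℝ) : ℂ :=
  ∑ k ∈ range n, fc h k * cexp (I * k * t)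

lemma norm_cexp_I_mul_natCast_mul (k : ℕ) (t : ℝ) : ‖cexp (I * k * t)‖ = 1 := by
  simp [norm_exp]

section AddCircle

local instance : Fact (0 < 2 * π) := ⟨two_pi_pos⟩

lemma fourier_coe_two_pi (n : ℤ) (x : ℝ) :
    fourier n (x : AddCircle (2 * π)) = cexp (I * n * x) := by
  rw [fourier_coe_apply]
  congr 1
  field_simp
  push_cast
  ring

lemma fc_eq_fourierCoeff {f : ℝ → ℂ} (hp : Function.Periodic f (2 * π)) (n : ℤ) :
    fc f n = fourierCoeff hp.lift n := by
  rw [fourierCoeff_eq_intervalIntegral _ n (-π), show -π + 2 * π = π by ring, fc, real_smul]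
  push_cast
  congr 1
  refine intervalIntegral.integral_congr fun x _ => ?_
  rw [smul_eq_mul, Function.Periodic.lift_coe, fourier_coe_two_pi, mul_comm]
  push_cast
  ring_nf

lemma hasSum_fc {f : ℝ → ℂ} (hc : Continuous f) (hp : Function.Periodic f (2 * π))
    (habs : Summable fun k : ℤ => ‖fc f k‖) (t : ℝ) :
    HasSum (fun k : ℤ => fc f k * cexp (I * k * t)) (f t) := by
  let F : C(AddCircle (2 * π), ℂ) := ⟨hp.lift, continuous_coinduced_dom.mpr hc⟩
  have hcoeff (n : ℤ) : fourierCoeff hp.lift n = fc f n := (fc_eq_fourierCoeff hp n).symm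
  have h := has_pointwise_sum_fourier_series_of_summable (f := F)
    ((Summable.of_norm habs).congr fun n => (hcoeff n).symm) t
  simpa only [F, ContinuousMap.coe_mk, hcoeff, smul_eq_mul, fourier_coe_two_pi,
    Function.Periodic.lift_coe] using h

end AddCircle

lemma hasSum_fc_nat {f : ℝ → ℂ} (hc : Continuous f) (hp : Function.Periodic f (2 * π))
    (habs : Summable fun k : ℤ => ‖fc f k‖) (hanal : ∀ k : ℤ, k < 0 → fc f k = 0) (t : ℝ) :
    HasSum (fun j : ℕ => fc f j * cexp (I * j * t)) (f t) := by
  have hvanish : ∀ k ∉ Set.range ((↑) : ℕ → ℤ), fc f k * cexp (I * k * t) = 0 := by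
    intro k hk
    have hneg : k < 0 := by
      by_contra! h
      exact hk ⟨k.toNat, by omega⟩
    simp [hanal k hneg]
  simpa only [Function.comp_def, Int.cast_natCast] using
    ((Nat.cast_injective (R := ℤ)).hasSum_iff hvanish).mpr (hasSum_fc hc hp habs t)

lemma hasSum_fc_of_dominated {ι : Type*} [Countable ι] {F : ι → ℝ → ℂ} {h : ℝ → ℂ}
    {bound : ι → ℝ} (hF : ∀ i, Continuous (F i))
    (hbound : ∀ i, ∀ θ ∈ Set.uIcc (-π) π, ‖F i θ‖ ≤ bound i) (hs : Summable bound)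
    (hsum : ∀ θ, HasSum (F · θ) (h θ)) (k : ℤ) :
    HasSum (fun i => fc (F i) k) (fc h k) := by
  refine HasSum.mul_left _ <| intervalIntegral.hasSum_integral_of_dominated_convergence
    (fun i _ => bound i) (fun i => by fun_prop) (fun i => ae_of_all _ fun θ hθ => ?_)
    (ae_of_all _ fun _ _ => hs) intervalIntegrable_const
    (ae_of_all _ fun θ _ => (hsum θ).mul_right _)
  rw [norm_mul, show ‖cexp (-I * k * θ)‖ = 1 by simp [norm_exp], mul_one]
  exact hbound i θ (Set.uIoc_subset_uIcc hθ)

lemma fc_const_mul_cexp_mul (c : ℂ) (g : ℝ → ℂ) (j : ℕ) (k : ℤ) :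
    fc (fun θ => c * cexp (I * j * θ) * g θ) k = c * fc g (k - j) := by
  have hshift (θ : ℝ) : c * cexp (I * j * θ) * g θ * cexp (-I * k * θ)
      = c * (g θ * cexp (-I * ↑(k - j) * θ)) := by
    rw [show -I * ((k - j : ℤ) : ℂ) * θ = I * j * θ + -I * k * θ by push_cast; ring, Complex.exp_add]
    ring
  simp only [fc, hshift, intervalIntegral.integral_const_mul]
  ring

lemma hasSum_fc_mul {f g : ℝ → ℂ} {c : ℕ → ℂ} (hc : Summable fun j => ‖c j‖)
    (hf : ∀ t : ℝ, HasSum (fun j => c j * cexp (I * j * t)) (f t)) (hg : Continuous g) (k : ℤ) :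
    HasSum (fun j => c j * fc g (k - j)) (fc (fun θ => f θ * g θ) k) := by
  obtain ⟨C, hC⟩ := isCompact_uIcc.exists_bound_of_continuousOn hg.continuousOn
  simp_rw [← fc_const_mul_cexp_mul]
  refine hasSum_fc_of_dominated (bound := fun j => ‖c j‖ * C) (fun j => by fun_prop)
    (fun j θ hθ => ?_) (hc.mul_right C) (fun θ => (hf θ).mul_right (g θ)) k
  rw [norm_mul, norm_mul, norm_cexp_I_mul_natCast_mul, mul_one]
  exact mul_le_mul_of_nonneg_left (hC θ hθ) (norm_nonneg _)

lemma fc_mul_eq_sum_range {f g : ℝ → ℂ} (hc : Summable fun j : ℕ => ‖fc f j‖)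
    (hf : ∀ t : ℝ, HasSum (fun j : ℕ => fc f j * cexp (I * j * t)) (f t)) (hg : Continuous g)
    (hg_anal : ∀ k : ℤ, k < 0 → fc g k = 0) (k : ℕ) :
    fc (fun θ => f θ * g θ) k = ∑ j ∈ range (k + 1), fc f j * fc g ↑(k - j) := by
  refine ((hasSum_fc_mul hc hf hg k).unique
    (hasSum_sum_of_ne_finset_zero fun j hj => ?_)).trans (sum_congr rfl fun j hj => ?_)
  · rw [hg_anal _ (by simp only [mem_range] at hj; omega), mul_zero]
  · rw [Nat.cast_sub (by simpa [Nat.lt_succ_iff] using hj)]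

lemma analyticPartialSum_mul {f g : ℝ → ℂ}
    (hconv : ∀ k : ℕ, fc (fun θ => f θ * g θ) k = ∑ j ∈ range (k + 1), fc f j * fc g ↑(k - j))
    (n : ℕ) (t : ℝ) :
    analyticPartialSum (fun θ => f θ * g θ) n t
      = ∑ j ∈ range n, fc f j * cexp (I * j * t) * analyticPartialSum g (n - j) t := by
  simp only [analyticPartialSum, hconv, mul_sum, sum_mul]
  rw [← sum_range_diag_flip n fun j m => fc f j * cexp (I * j * t) * (fc g m * cexp (I * m * t))]
  refine sum_congr rfl fun k _ => sum_congr rfl fun j hj => ?_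
  have hjk : j ≤ k := Nat.lt_succ_iff.mp (mem_range.mp hj)
  rw [show cexp (I * k * t) = cexp (I * j * t) * cexp (I * ↑(k - j) * t) by
    rw [← Complex.exp_add, Nat.cast_sub hjk]; ring_nf]
  ring

lemma hasSum_mul_sub_analyticPartialSum_mul {f g : ℝ → ℂ}
    (hf : ∀ t : ℝ, HasSum (fun j : ℕ => fc f j * cexp (I * j * t)) (f t))
    (hconv : ∀ k : ℕ, fc (fun θ => f θ * g θ) k = ∑ j ∈ range (k + 1), fc f j * fc g ↑(k - j))
    (n : ℕ) (t : ℝ) :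
    HasSum (fun j : ℕ => fc f j * cexp (I * j * t) * (g t - analyticPartialSum g (n - j) t))
      (f t * g t - analyticPartialSum (fun θ => f θ * g θ) n t) := by
  have hfin : HasSum (fun j : ℕ => fc f j * cexp (I * j * t) * analyticPartialSum g (n - j) t)
      (analyticPartialSum (fun θ => f θ * g θ) n t) := by
    rw [analyticPartialSum_mul hconv]
    refine hasSum_sum_of_ne_finset_zero fun j hj => ?_
    simp [analyticPartialSum, Nat.sub_eq_zero_of_le (not_lt.mp (mem_range.not.mp hj))]
  simpa only [mul_sub] using ((hf t).mul_right (g t)).sub hfin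

lemma bddAbove_norm_sub_analyticPartialSum {g : ℝ → ℂ} (hc : Continuous g)
    (hp : Function.Periodic g (2 * π)) (n : ℕ) :
    BddAbove (Set.range fun t => ‖g t - analyticPartialSum g n t‖) := by
  obtain ⟨C, hC⟩ := isBounded_iff_forall_norm_le.mp (hp.isBounded_of_continuous two_pi_pos.ne' hc)
  refine ⟨C + ∑ k ∈ range n, ‖fc g k‖, ?_⟩
  rintro _ ⟨t, rfl⟩
  refine (norm_sub_le _ _).trans (add_le_add (hC _ ⟨t, rfl⟩) ((norm_sum_le _ _).trans ?_))
  simp only [norm_mul, norm_cexp_I_mul_natCast_mul, mul_one, le_refl]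

theorem analytic_A_mul_U (f g : ℝ → ℂ)
    (hf_cont : Continuous f) (hf_per : Function.Periodic f (2 * Real.pi))
    (hg_cont : Continuous g) (hg_per : Function.Periodic g (2 * Real.pi))
    (hf_abs : Summable (fun k : ℤ => ‖fc f k‖))
    (hf_anal : ∀ k : ℤ, k < 0 → fc f k = 0)
    (hg_anal : ∀ k : ℤ, k < 0 → fc g k = 0)
    (hg_unif : TendstoUniformly
      (fun N (t : ℝ) => ∑ k ∈ Finset.range (N + 1), fc g k * Complex.exp (Complex.I * k * t))
      g atTop) :
    TendstoUniformly
      (fun N (t : ℝ) => ∑ k ∈ Finset.range (N + 1),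
        fc (fun θ => f θ * g θ) k * Complex.exp (Complex.I * k * t))
      (fun θ => f θ * g θ) atTop := by
  have hc : Summable fun j : ℕ => ‖fc f j‖ := hf_abs.comp_injective Nat.cast_injective
  have hf := hasSum_fc_nat hf_cont hf_per hf_abs hf_anal
  have hconv := fc_mul_eq_sum_range hc hf hg_cont hg_anal
  set β : ℕ → ℝ := fun m => ⨆ t, ‖g t - analyticPartialSum g m t‖
  have hβ : Tendsto β atTop (𝓝 0) :=
    (tendsto_add_atTop_iff_nat 1).mp (tendsto_iSup_norm_sub_of_tendstoUniformly hg_unif)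
  have hbound (n : ℕ) (t : ℝ) : ‖f t * g t - analyticPartialSum (fun θ => f θ * g θ) n t‖
      ≤ ∑' j : ℕ, ‖fc f j‖ * β (n - j) := by
    refine (hasSum_mul_sub_analyticPartialSum_mul hf hconv n t).norm_le_of_bounded
      (summable_mul_comp_tsub β hc n).hasSum fun j => ?_
    rw [norm_mul, norm_mul, norm_cexp_I_mul_natCast_mul, mul_one]
    exact mul_le_mul_of_nonneg_left
      (le_ciSup (bddAbove_norm_sub_analyticPartialSum hg_cont hg_per _) t) (norm_nonneg _)
  have hρ := (tendsto_tsum_mul_comp_tsub hc hβ).comp (tendsto_add_atTop_nat 1)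
  refine Metric.tendstoUniformly_iff.mpr fun ε hε => ?_
  filter_upwards [hρ.eventually (gt_mem_nhds hε)] with N hN t
  rw [dist_eq_norm]
  exact (hbound (N + 1) t).trans_lt hN
end
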